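/- arXiv:0806.3784 — 6 statements merged into one kernel-verified Lean document; each statement's English description precedes it below -/
import Mathlib

section
/- If f ∈ ℝ[X₁,…,Xₙ] is SOS-convex and there exists u ∈ ℝⁿ with f(u) = 0 and ∇f(u) = 0, then f is an SOS polynomial. -/
/- Restrict `f` to the line through `u` and `x`: `g(t) = f(u + t(x - u))` is a polynomial in `t`
with coefficients in `ℝ[x]`, and Taylor's formula with integral remainder reads
`f = g(1) = g(0) + g'(0) + ∫₀¹ (1 - t) g''(t) dt`. The first two terms vanish since `f(u) = 0` and
`∇f(u) = 0`. SOS-convexity makes `g''(t) = (x - u)ᵀ ∇²f(u + t(x - u)) (x - u)` a sum of squares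
`∑ₖ Pₖ(t)²`. Finally `p ↦ ∫₀¹ (1 - t) p(t) dt` maps squares to sums of squares, because its Hankel
moment matrix is positive semidefinite and hence a Gram matrix `BᵀB`. -/

open MvPolynomial Matrix

/-- A polynomial is SOS if it is a finite sum of squares of polynomials. -/
def IsSOS {n : ℕ} (p : MvPolynomial (Fin n) ℝ) : Prop :=
  ∃ (k : ℕ) (q : Fin k → MvPolynomial (Fin n) ℝ), p = ∑ i, q i ^ 2

/-- A polynomial `f` is SOS-convex if its Hessian of formal second partial
derivatives factors as `L·Lᵀ` for some polynomial matrix `L`. -/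
def IsSOSConvex {n : ℕ} (f : MvPolynomial (Fin n) ℝ) : Prop :=
  ∃ (s : ℕ) (L : Matrix (Fin n) (Fin s) (MvPolynomial (Fin n) ℝ)),
    (Matrix.of fun i j => pderiv i (pderiv j f)) = L * Lᵀ

open scoped Polynomial

theorem IsSumSq.isSOS {n : ℕ} {p : MvPolynomial (Fin n) ℝ} (hp : IsSumSq p) : IsSOS p := by
  induction hp with
  | zero => exact ⟨0, Fin.elim0, by simp⟩
  | sq_add a _ ih =>
    obtain ⟨k, q, rfl⟩ := ih
    exact ⟨k + 1, Fin.cons a q, by simp [Fin.sum_univ_succ, sq]⟩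

theorem isSumSq_sum_smul_mul_of_posSemidef {A ι : Type*} [CommRing A] [Algebra ℝ A] [Fintype ι]
    {H : Matrix ι ι ℝ} (hH : H.PosSemidef) (a : ι → A) :
    IsSumSq (∑ k, ∑ l, H k l • (a k * a l)) := by
  classical
  open scoped MatrixOrder in
  obtain ⟨B, rfl⟩ := CStarAlgebra.nonneg_iff_eq_star_mul_self.mp hH.nonneg
  have h : ∑ k, ∑ l, (star B * B) k l • (a k * a l) = ∑ m, (∑ k, B m k • a k) ^ 2 := by
    simp only [sq, Finset.sum_mul_sum, smul_mul_smul_comm, mul_apply, star_apply, star_trivial,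
      Finset.sum_smul]
    exact (Finset.sum_congr rfl fun _ _ => Finset.sum_comm).trans Finset.sum_comm
  rw [h]
  exact IsSumSq.sum_sq _ _

theorem posSemidef_hankel_intervalIntegral {a b : ℝ} (hab : a ≤ b) {w : ℝ → ℝ}
    (hw : Continuous w) (hw₀ : ∀ t ∈ Set.Icc a b, 0 ≤ w t) (d : ℕ) :
    (Matrix.of fun k l : Fin d => ∫ t in a..b, w t * t ^ (k + l : ℕ)).PosSemidef := by
  refine posSemidef_iff_dotProduct_mulVec.mpr ⟨by ext k l; simp [add_comm], fun x => ?_⟩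
  have hcont : ∀ k l : Fin d, Continuous fun t => x k * x l * (w t * t ^ (k + l : ℕ)) :=
    fun k l => continuous_const.mul (hw.mul (continuous_pow _))
  calc 0 ≤ ∫ t in a..b, w t * (∑ k, x k * t ^ (k : ℕ)) ^ 2 :=
        intervalIntegral.integral_nonneg hab fun t ht => mul_nonneg (hw₀ t ht) (sq_nonneg _)
    _ = ∫ t in a..b, ∑ k, ∑ l, x k * x l * (w t * t ^ (k + l : ℕ)) := by
        refine intervalIntegral.integral_congr fun t _ => ?_
        rw [sq, Finset.sum_mul_sum, Finset.mul_sum]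
        simp only [Finset.mul_sum, pow_add]
        exact Finset.sum_congr rfl fun k _ => Finset.sum_congr rfl fun l _ => by ring
    _ = ∑ k, ∑ l, ∫ t in a..b, x k * x l * (w t * t ^ (k + l : ℕ)) := by
        rw [intervalIntegral.integral_finsetSum fun k _ =>
          (continuous_finsetSum _ fun l _ => hcont k l).intervalIntegrable a b]
        simp only [intervalIntegral.integral_finsetSum fun l _ => (hcont _ l).intervalIntegrable a b]
    _ = star x ⬝ᵥ (Matrix.of fun k l : Fin d => ∫ t in a..b, w t * t ^ (k + l : ℕ)) *ᵥ x := by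
        simp only [dotProduct, mulVec, of_apply, star_trivial, Finset.mul_sum,
          intervalIntegral.integral_const_mul]
        exact Finset.sum_congr rfl fun k _ => Finset.sum_congr rfl fun l _ => by ring

noncomputable def taylorMoment (m : ℕ) : ℝ := ∫ t in (0 : ℝ)..1, (1 - t) * t ^ m

theorem taylorMoment_eq (m : ℕ) : taylorMoment m = ((m + 1) * (m + 2) : ℝ)⁻¹ := by
  have h : ∀ t : ℝ, (1 - t) * t ^ m = t ^ m - t ^ (m + 1) := fun t => by ring
  simp only [taylorMoment, h]
  rw [intervalIntegral.integral_sub (intervalIntegral.intervalIntegrable_pow m)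
    (intervalIntegral.intervalIntegrable_pow (m + 1)), integral_pow, integral_pow]
  field_simp
  push_cast
  ring

theorem posSemidef_hankel_taylorMoment (d : ℕ) :
    (Matrix.of fun k l : Fin d => taylorMoment (k + l)).PosSemidef :=
  posSemidef_hankel_intervalIntegral zero_le_one (continuous_const.sub continuous_id)
    (fun _ ht => sub_nonneg.mpr ht.2) d

namespace Polynomial

variable {A : Type*} [CommRing A] [Algebra ℝ A]

noncomputable def momentFunctional (μ : ℕ → ℝ) : A[X] →ₗ[ℝ] A :=
  lsum fun m => μ m • LinearMap.id

@[simp]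
theorem momentFunctional_monomial (μ : ℕ → ℝ) (m : ℕ) (a : A) :
    momentFunctional μ (monomial m a) = μ m • a := by
  simp [momentFunctional]

theorem isSumSq_momentFunctional_sq {μ : ℕ → ℝ}
    (hμ : ∀ d, (Matrix.of fun k l : Fin d => μ (k + l)).PosSemidef) (p : A[X]) :
    IsSumSq (momentFunctional μ (p ^ 2)) := by
  set d := p.natDegree + 1
  have hp : p = ∑ k : Fin d, monomial k (p.coeff k) := by
    rw [Fin.sum_univ_eq_sum_range (fun k => monomial k (p.coeff k))]
    exact p.as_sum_range' d (Nat.lt_succ_self _)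
  have h : momentFunctional μ (p ^ 2)
      = ∑ k : Fin d, ∑ l : Fin d, μ (k + l) • (p.coeff k * p.coeff l) := by
    conv_lhs => rw [hp]
    simp only [sq, Finset.sum_mul_sum, monomial_mul_monomial, map_sum, momentFunctional_monomial]
  rw [h]
  exact isSumSq_sum_smul_mul_of_posSemidef (hμ d) _

theorem derivative_derivative_monomial_add_two (m : ℕ) (a : A) :
    derivative (derivative (monomial (m + 2) a)) = monomial m ((((m : ℝ) + 2) * (m + 1)) • a) := by
  simp only [derivative_monomial, Algebra.smul_def, map_mul, map_add, map_natCast, map_ofNat,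
    map_one]
  push_cast
  ring_nf

theorem eval_one_eq_add_momentFunctional_taylorMoment (p : A[X]) :
    p.eval 1 = p.coeff 0 + p.coeff 1 + momentFunctional taylorMoment (derivative (derivative p)) := by
  induction p using Polynomial.induction_on' with
  | add p q hp hq =>
    simp only [eval_add, coeff_add, map_add, hp, hq]
    abel
  | monomial m a =>
    rcases m with _ | _ | m
    · simp
    · simp
    · rw [derivative_derivative_monomial_add_two, momentFunctional_monomial, smul_smul,
        taylorMoment_eq, inv_mul_eq_one₀ (by positivity) |>.mpr (by ring), one_smul]
      simp [coeff_monomial]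

end Polynomial

namespace MvPolynomial

variable {R σ : Type*} [CommRing R]

noncomputable def restrictLine (u : σ → R) : MvPolynomial σ R →ₐ[R] (MvPolynomial σ R)[X] :=
  aeval fun i => Polynomial.C (C (u i)) + Polynomial.C (X i - C (u i)) * Polynomial.X

@[simp]
theorem restrictLine_X (u : σ → R) (i : σ) :
    restrictLine u (X i) = Polynomial.C (C (u i)) + Polynomial.C (X i - C (u i)) * Polynomial.X :=
  aeval_X _ _

@[simp]
theorem restrictLine_C (u : σ → R) (r : R) : restrictLine u (C r) = Polynomial.C (C r) :=
  aeval_C _ _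

theorem eval_one_restrictLine (u : σ → R) (f : MvPolynomial σ R) :
    (restrictLine u f).eval 1 = f := by
  have h : (Polynomial.evalRingHom 1).comp (restrictLine u).toRingHom = RingHom.id _ := by
    ext <;> simp
  exact RingHom.congr_fun h f

theorem coeff_zero_restrictLine (u : σ → R) (f : MvPolynomial σ R) :
    (restrictLine u f).coeff 0 = C (eval u f) := by
  have h : Polynomial.constantCoeff.comp (restrictLine u).toRingHom = C.comp (eval u) := by
    ext <;> simp
  exact RingHom.congr_fun h f

variable [Fintype σ]

theorem derivative_restrictLine (u : σ → R) (f : MvPolynomial σ R) :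
    Polynomial.derivative (restrictLine u f)
      = ∑ i, Polynomial.C (X i - C (u i)) * restrictLine u (pderiv i f) := by
  classical
  induction f using MvPolynomial.induction_on with
  | C a => simp
  | add p q hp hq => simp only [map_add, hp, hq, mul_add, Finset.sum_add_distrib]
  | mul_X p i hp =>
    simp only [Derivation.leibniz, pderiv_X, map_add, map_mul, Polynomial.derivative_mul, hp,
      mul_add, Finset.sum_add_distrib, Pi.single_apply, smul_eq_mul]
    have hXi : Polynomial.derivative (restrictLine u (X i)) = Polynomial.C (X i - C (u i)) := by
      simp
    simp only [apply_ite, map_one, map_zero, mul_one, mul_zero, Finset.sum_ite_eq,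
      Finset.mem_univ, if_true]
    rw [hXi, Finset.sum_mul, add_comm, mul_comm (restrictLine u p)]
    exact congrArg₂ _ rfl (Finset.sum_congr rfl fun j _ => by ring)

theorem coeff_one_restrictLine (u : σ → R) (f : MvPolynomial σ R) :
    (restrictLine u f).coeff 1 = ∑ i, (X i - C (u i)) * C (eval u (pderiv i f)) := by
  have h := Polynomial.coeff_derivative (restrictLine u f) 0
  rw [zero_add, Nat.cast_zero, zero_add, mul_one] at h
  simp only [← h, derivative_restrictLine, Polynomial.finsetSum_coeff, Polynomial.coeff_C_mul,
    coeff_zero_restrictLine]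

theorem derivative_derivative_restrictLine (u : σ → R) (f : MvPolynomial σ R) :
    Polynomial.derivative (Polynomial.derivative (restrictLine u f))
      = ∑ i, ∑ j, Polynomial.C ((X i - C (u i)) * (X j - C (u j)))
          * restrictLine u (pderiv j (pderiv i f)) := by
  simp only [derivative_restrictLine, Polynomial.derivative_sum, Polynomial.derivative_C_mul,
    Finset.mul_sum, ← mul_assoc, ← Polynomial.C_mul]

theorem derivative_derivative_restrictLine_eq_sum_sq {κ : Type*} [Fintype κ] (u : σ → R)
    {f : MvPolynomial σ R} {L : Matrix σ κ (MvPolynomial σ R)}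
    (hL : (Matrix.of fun i j => pderiv i (pderiv j f)) = L * Lᵀ) :
    Polynomial.derivative (Polynomial.derivative (restrictLine u f))
      = ∑ k, (∑ i, Polynomial.C (X i - C (u i)) * restrictLine u (L i k)) ^ 2 := by
  have hHess : ∀ i j, pderiv j (pderiv i f) = ∑ k, L j k * L i k := fun i j => by
    simpa [Matrix.mul_apply] using congrFun (congrFun hL j) i
  calc _ = ∑ i, ∑ j, ∑ k, Polynomial.C (X i - C (u i)) * restrictLine u (L i k)
          * (Polynomial.C (X j - C (u j)) * restrictLine u (L j k)) := by
        rw [derivative_derivative_restrictLine]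
        refine Finset.sum_congr rfl fun i _ => Finset.sum_congr rfl fun j _ => ?_
        simp only [hHess, map_sum, map_mul, Finset.mul_sum]
        exact Finset.sum_congr rfl fun k _ => by ring
    _ = _ := by
        simp only [sq, Finset.sum_mul_sum]
        exact (Finset.sum_congr rfl fun i _ => Finset.sum_comm).trans Finset.sum_comm

end MvPolynomial

/-- if `f` is SOS-convex and `f(u) = 0`, `∇f(u) = 0` for some `u`,
then `f` is SOS. -/
theorem stmt_1 (n : ℕ) (f : MvPolynomial (Fin n) ℝ)
    (hf : IsSOSConvex f) (u : Fin n → ℝ)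
    (hfu : eval u f = 0) (hgrad : ∀ i, eval u (pderiv i f) = 0) :
    IsSOS f := by
  obtain ⟨s, L, hL⟩ := hf
  have htaylor := Polynomial.eval_one_eq_add_momentFunctional_taylorMoment (restrictLine u f)
  simp only [eval_one_restrictLine, coeff_zero_restrictLine, coeff_one_restrictLine, hfu, hgrad,
    map_zero, mul_zero, Finset.sum_const_zero, zero_add,
    derivative_derivative_restrictLine_eq_sum_sq u hL, map_sum] at htaylor
  rw [htaylor]
  exact (IsSumSq.sum fun k _ =>
    Polynomial.isSumSq_momentFunctional_sq posSemidef_hankel_taylorMoment _).isSOS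
end

section
/- Let P be a symmetric r×r matrix with entries in ℝ[X₁,…,Xₙ] that is an SOS matrix polynomial, and let u ∈ ℝⁿ be fixed. Then there exists a symmetric SOS matrix polynomial F with entries in ℝ[X₁,…,Xₙ] such that F(x) = ∫₀¹∫₀ᵗ P(u + s(x − u)) ds dt for every x ∈ ℝⁿ. -/
open MvPolynomial Matrix

/-- A symmetric polynomial matrix `P` is an SOS matrix polynomial if `P = L·Lᵀ`
for some polynomial matrix `L`. -/
def IsSOSMatrix {n r : ℕ} (P : Matrix (Fin r) (Fin r) (MvPolynomial (Fin n) ℝ)) : Prop :=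
  ∃ (s : ℕ) (L : Matrix (Fin r) (Fin s) (MvPolynomial (Fin n) ℝ)), P = L * Lᵀ

/-!
On the line through `u` and `x`, every entry of `L` becomes a polynomial `∑ₖ ℓₖ(x) sᵏ` in `s`,
so the double integral of `P = L Lᵀ` is `∑ₖₗ μₖ₊ₗ ℓₖ ℓₗᵀ` with moments `μₘ = ∫₀¹∫₀ᵗ sᵐ ds dt`.
The Hankel matrix `(μₖ₊ₗ)` is positive semidefinite, since `∫₀¹∫₀ᵗ g(s)² ds dt ≥ 0`, hence equals
`BᵀB`, and `F = N Nᵀ` with `N_q = ∑ₖ B_qk ℓₖ`.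
-/

open intervalIntegral

theorem integral_integral_finsetSum {ι : Type*} (S : Finset ι) (f : ι → ℝ → ℝ)
    (hf : ∀ i ∈ S, Continuous (f i)) :
    ∫ t in (0:ℝ)..1, ∫ s in (0:ℝ)..t, ∑ i ∈ S, f i s =
      ∑ i ∈ S, ∫ t in (0:ℝ)..1, ∫ s in (0:ℝ)..t, f i s := by
  have hf_int : ∀ i ∈ S, ∀ a b : ℝ, IntervalIntegrable (f i) MeasureTheory.volume a b :=
    fun i hi a b => (hf i hi).intervalIntegrable a b
  simp_rw [integral_finsetSum fun i hi => hf_int i hi _ _]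
  exact integral_finsetSum fun i hi =>
    (continuous_primitive (hf_int i hi) 0).intervalIntegrable 0 1

noncomputable def momentMatrix (D : ℕ) : Matrix (Fin D) (Fin D) ℝ :=
  Matrix.of fun k l => ∫ t in (0:ℝ)..1, ∫ s in (0:ℝ)..t, s ^ (k + l : ℕ)

theorem integral_integral_mul_eq_dotProduct_momentMatrix {D : ℕ} (a b : Fin D → ℝ) :
    ∫ t in (0:ℝ)..1, ∫ s in (0:ℝ)..t, (∑ k, a k * s ^ (k : ℕ)) * ∑ l, b l * s ^ (l : ℕ) =
      a ⬝ᵥ momentMatrix D *ᵥ b := by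
  have hexpand : ∀ s : ℝ, (∑ k, a k * s ^ (k : ℕ)) * ∑ l, b l * s ^ (l : ℕ) =
      ∑ k, ∑ l, a k * b l * s ^ (k + l : ℕ) := fun s => by
    rw [Finset.sum_mul_sum]
    exact Finset.sum_congr rfl fun k _ => Finset.sum_congr rfl fun l _ => by ring
  simp only [hexpand, dotProduct, mulVec, momentMatrix, of_apply, Finset.mul_sum]
  rw [integral_integral_finsetSum _ _ fun k _ => by fun_prop]
  refine Finset.sum_congr rfl fun k _ => ?_
  rw [integral_integral_finsetSum _ _ fun l _ => by fun_prop]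
  refine Finset.sum_congr rfl fun l _ => ?_
  simp only [integral_const_mul]
  ring

theorem momentMatrix_posSemidef (D : ℕ) : (momentMatrix D).PosSemidef := by
  refine posSemidef_iff_dotProduct_mulVec.mpr ⟨?_, fun v => ?_⟩
  · ext k l
    simp [momentMatrix, add_comm]
  · rw [star_trivial, ← integral_integral_mul_eq_dotProduct_momentMatrix]
    refine integral_nonneg zero_le_one fun t ht => ?_
    exact integral_nonneg ht.1 fun s _ => mul_self_nonneg _

theorem exists_integral_integral_mul_eq_dotProduct (D : ℕ) :
    ∃ B : Matrix (Fin D) (Fin D) ℝ, ∀ a b : Fin D → ℝ,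
      ∫ t in (0:ℝ)..1, ∫ s in (0:ℝ)..t, (∑ k, a k * s ^ (k : ℕ)) * ∑ l, b l * s ^ (l : ℕ) =
        (B *ᵥ a) ⬝ᵥ (B *ᵥ b) := by
  open scoped MatrixOrder in
  obtain ⟨B, hB⟩ :=
    CStarAlgebra.nonneg_iff_eq_star_mul_self.mp (momentMatrix_posSemidef D).nonneg
  refine ⟨B, fun a b => ?_⟩
  rw [integral_integral_mul_eq_dotProduct_momentMatrix, hB, star_eq_conjTranspose,
    conjTranspose_eq_transpose_of_trivial, ← mulVec_mulVec, dotProduct_mulVec, vecMul_transpose]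

section restrictToLine

variable {σ R : Type*} [CommRing R]

noncomputable def restrictToLine (u : σ → R) :
    MvPolynomial σ R →ₐ[R] Polynomial (MvPolynomial σ R) :=
  aeval fun k => Polynomial.C (C (u k)) + Polynomial.X * Polynomial.C (X k - C (u k))

theorem eval_map_restrictToLine (u x : σ → R) (s : R) (p : MvPolynomial σ R) :
    ((restrictToLine u p).map (eval x)).eval s = eval (fun k => u k + s * (x k - u k)) p := by
  induction p using MvPolynomial.induction_on with
  | C a => simp [restrictToLine]
  | add p q hp hq => simp [hp, hq]
  | mul_X p k hp =>
    rw [map_mul, Polynomial.map_mul, Polynomial.eval_mul, hp]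
    simp [restrictToLine, mul_comm]

theorem eval_lineMap_eq_sum_coeff {u : σ → R} {p : MvPolynomial σ R} {D : ℕ}
    (hD : (restrictToLine u p).natDegree < D) (x : σ → R) (s : R) :
    eval (fun k => u k + s * (x k - u k)) p =
      ∑ k : Fin D, eval x ((restrictToLine u p).coeff k) * s ^ (k : ℕ) := by
  rw [← eval_map_restrictToLine,
    Polynomial.eval_eq_sum_range' (Polynomial.natDegree_map_le.trans_lt hD),
    ← Fin.sum_univ_eq_sum_range]
  simp only [Polynomial.coeff_map]

end restrictToLine

theorem isSOSMatrix_mul_transpose {n r : ℕ} {ι : Type*} [Fintype ι]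
    (N : Matrix (Fin r) ι (MvPolynomial (Fin n) ℝ)) : IsSOSMatrix (N * Nᵀ) :=
  ⟨_, N.submatrix id (Fintype.equivFin ι).symm, by
    rw [transpose_submatrix, submatrix_mul_equiv, submatrix_id_id]⟩

theorem stmt_2_general (n r : ℕ) (P : Matrix (Fin r) (Fin r) (MvPolynomial (Fin n) ℝ))
    (hP : IsSOSMatrix P) (u : Fin n → ℝ) :
    ∃ F : Matrix (Fin r) (Fin r) (MvPolynomial (Fin n) ℝ),
      F.IsSymm ∧ IsSOSMatrix F ∧
      ∀ (x : Fin n → ℝ) (i j : Fin r),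
        eval x (F i j) =
          ∫ t in (0:ℝ)..(1:ℝ), ∫ s in (0:ℝ)..t,
            eval (fun k => u k + s * (x k - u k)) (P i j) := by
  obtain ⟨m, L, rfl⟩ := hP
  obtain ⟨d, hd⟩ :=
    Finite.exists_le fun ij : Fin r × Fin m => (restrictToLine u (L ij.1 ij.2)).natDegree
  obtain ⟨B, hB⟩ := exists_integral_integral_mul_eq_dotProduct (d + 1)
  let coeffs (i : Fin r) (j : Fin m) (k : Fin (d + 1)) := (restrictToLine u (L i j)).coeff k
  let N : Matrix (Fin r) (Fin (d + 1) × Fin m) (MvPolynomial (Fin n) ℝ) :=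
    of fun i q => ∑ k, C (B q.1 k) * coeffs i q.2 k
  refine ⟨N * Nᵀ, by rw [IsSymm, transpose_mul, transpose_transpose],
    isSOSMatrix_mul_transpose N, fun x i j => ?_⟩
  have heval (i : Fin r) (q : Fin (d + 1) × Fin m) :
      eval x (N i q) = (B *ᵥ fun k => eval x (coeffs i q.2 k)) q.1 := by
    simp [N, mulVec, dotProduct]
  calc eval x ((N * Nᵀ) i j)
      = ∑ j', (B *ᵥ fun k => eval x (coeffs i j' k)) ⬝ᵥ (B *ᵥ fun k => eval x (coeffs j j' k)) := by
        simp only [mul_apply, transpose_apply, map_sum, map_mul, heval, Fintype.sum_prod_type_right,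
          dotProduct]
    _ = ∑ j', ∫ t in (0:ℝ)..1, ∫ s in (0:ℝ)..t, (∑ k, eval x (coeffs i j' k) * s ^ (k : ℕ)) *
          ∑ l, eval x (coeffs j j' l) * s ^ (l : ℕ) := by
        simp only [hB]
    _ = _ := by
        rw [← integral_integral_finsetSum _ _ fun _ _ => by fun_prop]
        simp only [mul_apply, transpose_apply, map_sum, map_mul,
          eval_lineMap_eq_sum_coeff (Nat.lt_succ_of_le (hd (_, _))), coeffs]

/-- if `P` is a symmetric SOS matrix polynomial and `u ∈ ℝⁿ`, then there
is a symmetric SOS matrix polynomial `F` with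
`F(x) = ∫₀¹∫₀ᵗ P(u + s(x − u)) ds dt` (entrywise) for every `x`. -/
theorem stmt_2 (n r : ℕ) (P : Matrix (Fin r) (Fin r) (MvPolynomial (Fin n) ℝ))
    (hsymm : P.IsSymm) (hP : IsSOSMatrix P) (u : Fin n → ℝ) :
    ∃ F : Matrix (Fin r) (Fin r) (MvPolynomial (Fin n) ℝ),
      F.IsSymm ∧ IsSOSMatrix F ∧
      ∀ (x : Fin n → ℝ) (i j : Fin r),
        eval x (F i j) =
          ∫ t in (0:ℝ)..(1:ℝ), ∫ s in (0:ℝ)..t,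
            eval (fun k => u k + s * (x k - u k)) (P i j) :=
  stmt_2_general n r P hP u
end

section
/- Let f be a convex univariate real polynomial (i.e., f'' ≥ 0 on ℝ), let g ∈ ℝ[X₁,…,Xₙ], and set d := ⌈deg(f∘g)/2⌉. Let L be a linear functional on the space of polynomials of degree at most 2d satisfying L(1) = 1 and L(σ) ≥ 0 for every SOS polynomial σ of degree at most 2d. Then L(f∘g) ≥ f(L(g)), where f∘g ∈ ℝ[X₁,…,Xₙ] denotes the composition of f with g. -/
/-!
The tangent line of `f` at `a := L g` lies below `f`, so the gap `p := f - f(a) - f'(a)(X - a)`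
is a nonnegative univariate polynomial, hence a sum of squares `∑ sᵢ²` with
`2 deg sᵢ ≤ deg p ≤ deg f`. As `deg (f ∘ g) = deg f · deg g` over a domain, `p ∘ g = ∑ (sᵢ ∘ g)²`
is SOS of degree at most `deg (f ∘ g)`, so `L (p ∘ g) ≥ 0`. Since `L` fixes constants and
`L (g - a) = 0`, this says `L (f ∘ g) - f(a) ≥ 0`.
-/

open MvPolynomial

/-- A polynomial is SOS of degree at most `2d` if it is a finite sum of squares of
polynomials, each of degree at most `d`. -/
def IsSOSUpTo {n : ℕ} (d : ℕ) (p : MvPolynomial (Fin n) ℝ) : Prop :=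
  ∃ (k : ℕ) (q : Fin k → MvPolynomial (Fin n) ℝ),
    (∀ i, (q i).totalDegree ≤ d) ∧ p = ∑ i, q i ^ 2

open Set

theorem ConvexOn.add_deriv_mul_sub_le {S : Set ℝ} {f : ℝ → ℝ} (hf : ConvexOn ℝ S f) {a x : ℝ}
    (ha : a ∈ S) (hx : x ∈ S) (hfa : DifferentiableAt ℝ f a) :
    f a + deriv f a * (x - a) ≤ f x := by
  rcases lt_trichotomy x a with hxa | rfl | hax
  · have hslope := hf.slope_le_deriv hx ha hxa hfa
    rw [slope_def_field, div_le_iff₀ (sub_pos.mpr hxa)] at hslope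
    linarith
  · simp
  · have hslope := hf.deriv_le_slope ha hx hax hfa
    rw [slope_def_field, le_div_iff₀ (sub_pos.mpr hax)] at hslope
    linarith

namespace Polynomial

theorem convexOn_univ_eval {f : ℝ[X]} (hf : ∀ x, 0 ≤ (derivative (derivative f)).eval x) :
    ConvexOn ℝ univ fun x => f.eval x := by
  have hderiv : deriv (fun x => f.eval x) = fun x => (derivative f).eval x := by
    ext x; exact Polynomial.deriv f
  refine convexOn_univ_of_deriv2_nonneg f.differentiable ?_ fun x => ?_
  · rw [hderiv]; exact (derivative f).differentiable
  · simpa [hderiv, Polynomial.deriv] using hf x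

/-- Subtract the global minimum `m = p(r)`: `r` is then a root of multiplicity at least two. -/
theorem exists_eq_C_add_sq_mul_of_nonneg {p : ℝ[X]} (hp : ∀ x, 0 ≤ p.eval x) :
    ∃ m r q, 0 ≤ m ∧ (∀ x, 0 ≤ q.eval x) ∧ p = C m + (X - C r) ^ 2 * q := by
  obtain ⟨r, hr⟩ := p.exists_forall_norm_le
  simp only [Real.norm_of_nonneg (hp _)] at hr
  set h := p - C (p.eval r)
  have hroot : h.IsRoot r := by simp [h]
  have hderiv : (derivative h).IsRoot r := by
    have hmin : IsLocalMin (fun x => h.eval x) r :=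
      Filter.Eventually.of_forall fun y => by simpa [h] using hr y
    simpa [h, Polynomial.deriv] using hmin.deriv_eq_zero
  obtain ⟨q, hq⟩ : (X - C r) ^ 2 ∣ h := by
    rcases eq_or_ne h 0 with h0 | h0
    · simp [h0]
    exact (le_rootMultiplicity_iff h0).mp
      ((one_lt_rootMultiplicity_iff_isRoot h0).mpr ⟨hroot, hderiv⟩)
  refine ⟨p.eval r, r, q, hp r, fun x => ?_, by rw [← hq]; ring⟩
  have hq_off : ∀ y ∈ ({r}ᶜ : Set ℝ), 0 ≤ q.eval y := fun y hy => by
    have hpos : 0 < (y - r) ^ 2 := by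
      have hne : y - r ≠ 0 := sub_ne_zero.mpr hy
      positivity
    have hy' : h.eval y = (y - r) ^ 2 * q.eval y := by simp [hq]
    simp only [h, eval_sub, eval_C] at hy'
    nlinarith [hr y]
  exact (isClosed_le continuous_const q.continuous).closure_subset_iff.mpr hq_off
    ((dense_compl_singleton r).closure_eq ▸ mem_univ x)

theorem exists_sum_sq_of_nonneg {p : ℝ[X]} (hp : ∀ x, 0 ≤ p.eval x) :
    ∃ (k : ℕ) (s : Fin k → ℝ[X]),
      (∀ i, 2 * (s i).natDegree ≤ p.natDegree) ∧ p = ∑ i, s i ^ 2 := by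
  induction hdeg : p.natDegree using Nat.strong_induction_on generalizing p with
  | _ N ih =>
  obtain ⟨m, r, q, hm, hq, rfl⟩ := exists_eq_C_add_sq_mul_of_nonneg hp
  have hsqrt : C m = C √m ^ 2 := by rw [← C_pow, Real.sq_sqrt hm]
  rcases eq_or_ne q 0 with rfl | hq0
  · exact ⟨1, fun _ => C √m, by simp, by simp [hsqrt]⟩
  have hN : N = q.natDegree + 2 := by
    rw [← hdeg, natDegree_C_add, natDegree_mul (pow_ne_zero _ (X_sub_C_ne_zero r)) hq0,
      natDegree_pow, natDegree_X_sub_C]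
    ring
  obtain ⟨k, s, hs, rfl⟩ := ih q.natDegree (by omega) hq rfl
  refine ⟨k + 1, Fin.cons (C √m) fun i => (X - C r) * s i, fun i => ?_, ?_⟩
  · refine Fin.cases (by simp) (fun j => ?_) i
    have hmul := natDegree_mul_le (p := X - C r) (q := s j)
    rw [natDegree_X_sub_C] at hmul
    simp only [Fin.cons_succ]
    have hsj := hs j
    omega
  · simp [Fin.sum_univ_succ, hsqrt, Finset.mul_sum, mul_pow]

variable {R : Type*} [CommRing R]

noncomputable def tangentGap (f : R[X]) (a : R) : R[X] :=
  f - C (f.eval a) - C ((derivative f).eval a) * (X - C a)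

theorem eval_tangentGap_nonneg {f : ℝ[X]}
    (hf : ∀ x, 0 ≤ (derivative (derivative f)).eval x) (a x : ℝ) :
    0 ≤ (f.tangentGap a).eval x := by
  have htangent := (convexOn_univ_eval hf).add_deriv_mul_sub_le (mem_univ a) (mem_univ x)
    f.differentiableAt
  simp only [Polynomial.deriv] at htangent
  simp only [tangentGap, eval_sub, eval_mul, eval_C, eval_X]
  linarith

theorem natDegree_tangentGap_le (f : R[X]) (a : R) :
    (f.tangentGap a).natDegree ≤ f.natDegree := by
  rcases Nat.eq_zero_or_pos f.natDegree with hf | hf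
  · obtain ⟨b, rfl⟩ := natDegree_eq_zero.mp hf
    simp [tangentGap]
  · have hlin : (C ((derivative f).eval a) * (X - C a)).natDegree ≤ f.natDegree :=
      (natDegree_C_mul_le _ _).trans ((natDegree_X_sub_C_le a).trans hf)
    rw [tangentGap, natDegree_sub_le_iff_left hlin, natDegree_sub_le_iff_left (by simp)]

theorem map_aeval_tangentGap {A : Type*} [CommRing A] [Algebra R A] (L : A →ₗ[R] R)
    (hL1 : L 1 = 1) (f : R[X]) (x : A) :
    L (aeval x (f.tangentGap (L x))) = L (aeval x f) - f.eval (L x) := by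
  simp [tangentGap, Algebra.algebraMap_eq_smul_one, hL1]

end Polynomial

namespace MvPolynomial

variable {σ R : Type*}

theorem totalDegree_aeval_le [CommSemiring R] (q : Polynomial R) (g : MvPolynomial σ R) :
    (Polynomial.aeval g q).totalDegree ≤ q.natDegree * g.totalDegree := by
  rw [Polynomial.aeval_eq_sum_range]
  refine (totalDegree_finsetSum _ _).trans (Finset.sup_le fun i hi => ?_)
  refine (totalDegree_smul_le _ _).trans ((totalDegree_pow _ _).trans ?_)
  exact Nat.mul_le_mul_right _ (Nat.lt_succ_iff.mp (Finset.mem_range.mp hi))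

variable [CommRing R] [IsDomain R]

theorem totalDegree_pow_of_isDomain (g : MvPolynomial σ R) (k : ℕ) :
    (g ^ k).totalDegree = k * g.totalDegree := by
  cases exists_wellFoundedGT σ
  simp [← degree_degLexDegree, MonomialOrder.degree_pow]

theorem totalDegree_aeval_of_isDomain (f : Polynomial R) (g : MvPolynomial σ R) :
    (Polynomial.aeval g f).totalDegree = f.natDegree * g.totalDegree := by
  refine le_antisymm (totalDegree_aeval_le f g) ?_
  rcases Nat.eq_zero_or_pos f.natDegree with hf | hf
  · simp [hf]
  rcases Nat.eq_zero_or_pos g.totalDegree with hg | hg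
  · simp [hg]
  have hg0 : g ≠ 0 := by rintro rfl; simp at hg
  have hsplit : Polynomial.aeval g f = Polynomial.aeval g f.eraseLead
      + C f.leadingCoeff * g ^ f.natDegree := by
    conv_lhs => rw [← f.eraseLead_add_C_mul_X_pow, map_add, map_mul, map_pow, Polynomial.aeval_C,
      Polynomial.aeval_X, MvPolynomial.algebraMap_eq]
  have hlead : (C f.leadingCoeff * g ^ f.natDegree).totalDegree
      = f.natDegree * g.totalDegree := by
    have hc : C f.leadingCoeff ≠ (0 : MvPolynomial σ R) := by
      simpa using Polynomial.leadingCoeff_ne_zero.mpr (Polynomial.ne_zero_of_natDegree_gt hf)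
    rw [totalDegree_mul_of_isDomain hc (pow_ne_zero _ hg0), totalDegree_C, zero_add,
      totalDegree_pow_of_isDomain]
  have hrest : (Polynomial.aeval g f.eraseLead).totalDegree < f.natDegree * g.totalDegree :=
    (totalDegree_aeval_le _ _).trans_lt <|
      (Nat.mul_le_mul_right _ f.eraseLead_natDegree_le).trans_lt
        (Nat.mul_lt_mul_of_pos_right (by omega) hg)
  rw [hsplit, totalDegree_add_eq_right_of_totalDegree_lt (hlead ▸ hrest), hlead]

end MvPolynomial

theorem isSOSUpTo_aeval_sum_sq {n k d : ℕ} (g : MvPolynomial (Fin n) ℝ)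
    (s : Fin k → Polynomial ℝ) (hs : ∀ i, (s i).natDegree * g.totalDegree ≤ d) :
    IsSOSUpTo d (Polynomial.aeval g (∑ i, s i ^ 2)) :=
  ⟨k, fun i => Polynomial.aeval g (s i), fun i => (totalDegree_aeval_le _ _).trans (hs i),
    by simp⟩

/-- if `f` is a convex univariate polynomial (`f'' ≥ 0` on `ℝ`),
`g ∈ ℝ[X₁,…,Xₙ]`, `d := ⌈deg(f∘g)/2⌉`, and `L` is a linear functional with `L(1) = 1`
nonnegative on SOS polynomials of degree at most `2d`, then `L(f∘g) ≥ f(L(g))`. -/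
theorem stmt_4 (n : ℕ) (f : Polynomial ℝ)
    (hconv : ∀ x : ℝ, 0 ≤ (Polynomial.derivative (Polynomial.derivative f)).eval x)
    (g : MvPolynomial (Fin n) ℝ)
    (L : MvPolynomial (Fin n) ℝ →ₗ[ℝ] ℝ)
    (hL1 : L 1 = 1)
    (hLsos : ∀ σ : MvPolynomial (Fin n) ℝ,
      IsSOSUpTo (((Polynomial.aeval g f : MvPolynomial (Fin n) ℝ).totalDegree + 1) / 2) σ →
        0 ≤ L σ) :
    f.eval (L g) ≤ L (Polynomial.aeval g f) := by
  obtain ⟨k, s, hs, hsum⟩ := Polynomial.exists_sum_sq_of_nonneg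
    (Polynomial.eval_tangentGap_nonneg hconv (L g))
  have hsos : IsSOSUpTo (((Polynomial.aeval g f).totalDegree + 1) / 2)
      (Polynomial.aeval g (f.tangentGap (L g))) := by
    rw [hsum]
    refine isSOSUpTo_aeval_sum_sq g s fun i => ?_
    have hsf := (hs i).trans (f.natDegree_tangentGap_le (L g))
    rw [totalDegree_aeval_of_isDomain, Nat.le_div_iff_mul_le two_pos]
    nlinarith
  have hgap := hLsos _ hsos
  rw [Polynomial.map_aeval_tangentGap L hL1] at hgap
  linarith
end

section
/- Let g₁,…,gₘ ∈ ℝ[X₁,…,Xₙ], K := {x ∈ ℝⁿ : gⱼ(x) ≥ 0, j = 1,…,m}, assume Slater's condition holds, and let f ∈ ℝ[X₁,…,Xₙ] attain its infimum f* := inf{f(x) : x ∈ K} at some point of K. Suppose f is SOS-convex, −gⱼ is SOS-convex for every j, and d := max(⌈deg f/2⌉, maxⱼ ⌈deg gⱼ/2⌉). Then for every linear functional L on the polynomials of degree at most 2d with L(1) = 1, L(σ) ≥ 0 for every SOS polynomial σ of degree at most 2d, and L(gⱼ) ≥ 0 for all j, the point x* := (L(X₁),…,L(Xₙ)) belongs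 to K and f* ≤ f(x*) ≤ L(f); consequently the infimum of L(f) over all such L equals f*. -/
open MvPolynomial Matrix

/-! For an SOS-convex `p` and a point `a`, the Taylor remainder `p - p(a) - ∇p(a)·(X - a)` is a
sum of squares. By Taylor's formula it is `∫₀¹ (1 - t) (X - a)ᵀ ∇²p(a + t(X - a)) (X - a) dt`, and
`∇²p = L Lᵀ` turns the integrand into `Σₖ ρₖ(X, t)²`. Pairing the `ℝ[t]`-coefficients of `ρₖ`
under the positive functional `c ↦ ∫₀¹ (1 - t) c(t) dt` gives a positive semidefinite Gram
matrix in the monomials of `X`, hence a sum of squares. Squares of real polynomials cannot cancel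
in the top degree, so the squared terms have degree at most `d`.

Applying `L` to this certificate at `a = (L(X₁),…,L(Xₙ))` gives Jensen's inequality
`p(a) ≤ L(p)`, used for `f` and each `-gⱼ`; evaluation at `x*` shows that `f*` is attained. -/

open Polynomial (derivative)

namespace MonomialOrder

variable {σ R : Type*} [CommRing R] [LinearOrder R] (m : MonomialOrder σ) {s t : MvPolynomial σ R}

lemma coeff_nonneg_of_degree_le (hs : 0 ≤ m.leadingCoeff s) {D : σ →₀ ℕ}
    (h : m.degree s ≼[m] D) : 0 ≤ s.coeff D := by
  rcases h.lt_or_eq with h | h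
  · rw [m.coeff_eq_zero_of_lt h]
  · rwa [← m.toSyn.injective h]

variable [IsStrictOrderedRing R]

lemma degree_le_degree_add_of_le (hs : 0 ≤ m.leadingCoeff s) (ht : 0 ≤ m.leadingCoeff t)
    (h : m.degree t ≼[m] m.degree s) : m.degree s ≼[m] m.degree (s + t) := by
  rcases eq_or_ne s 0 with rfl | hs0
  · simp [m.zero_le]
  apply m.le_degree
  have hpos : 0 < m.leadingCoeff s := hs.lt_of_ne' (m.leadingCoeff_ne_zero_iff.mpr hs0)
  rw [mem_support_iff, coeff_add]
  exact (add_pos_of_pos_of_nonneg hpos (m.coeff_nonneg_of_degree_le ht h)).ne'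

lemma degree_add_of_leadingCoeff_nonneg (hs : 0 ≤ m.leadingCoeff s)
    (ht : 0 ≤ m.leadingCoeff t) :
    m.toSyn (m.degree (s + t)) = max (m.toSyn (m.degree s)) (m.toSyn (m.degree t)) := by
  refine le_antisymm m.degree_add_le (max_le_iff.mpr ?_)
  rcases le_total (m.toSyn (m.degree t)) (m.toSyn (m.degree s)) with h | h
  · exact ⟨m.degree_le_degree_add_of_le hs ht h, h.trans (m.degree_le_degree_add_of_le hs ht h)⟩
  · rw [add_comm]
    exact ⟨h.trans (m.degree_le_degree_add_of_le ht hs h), m.degree_le_degree_add_of_le ht hs h⟩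

lemma leadingCoeff_add_nonneg (hs : 0 ≤ m.leadingCoeff s) (ht : 0 ≤ m.leadingCoeff t) :
    0 ≤ m.leadingCoeff (s + t) := by
  have hmax := m.degree_add_of_leadingCoeff_nonneg hs ht
  rw [leadingCoeff, coeff_add]
  exact add_nonneg (m.coeff_nonneg_of_degree_le hs (hmax ▸ le_max_left _ _))
    (m.coeff_nonneg_of_degree_le ht (hmax ▸ le_max_right _ _))

lemma leadingCoeff_nonneg_of_isSumSq (hs : IsSumSq s) : 0 ≤ m.leadingCoeff s := by
  induction hs with
  | zero => simp
  | sq_add a _ ih =>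
    exact m.leadingCoeff_add_nonneg (by rw [m.leadingCoeff_mul]; exact mul_self_nonneg _) ih

end MonomialOrder

namespace MvPolynomial

lemma totalDegree_mul_self {σ R : Type*} [CommRing R] [IsDomain R] (a : MvPolynomial σ R) :
    (a * a).totalDegree = 2 * a.totalDegree := by
  rcases eq_or_ne a 0 with rfl | ha
  · simp
  · rw [totalDegree_mul_of_isDomain ha ha, two_mul]

variable {σ R : Type*} [LinearOrder σ] [WellFoundedGT σ]
  [CommRing R] [LinearOrder R] [IsStrictOrderedRing R]

lemma totalDegree_le_totalDegree_add_of_isSumSq {s t : MvPolynomial σ R}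
    (hs : IsSumSq s) (ht : IsSumSq t) : s.totalDegree ≤ (s + t).totalDegree := by
  have hmax := MonomialOrder.degLex.degree_add_of_leadingCoeff_nonneg
    (MonomialOrder.degLex.leadingCoeff_nonneg_of_isSumSq hs)
    (MonomialOrder.degLex.leadingCoeff_nonneg_of_isSumSq ht)
  exact degLex_totalDegree_monotone (hmax ▸ le_max_left _ _)

end MvPolynomial

lemma IsSumSq.isSOSUpTo {n d : ℕ} {p : MvPolynomial (Fin n) ℝ} (hp : IsSumSq p)
    (hdeg : p.totalDegree ≤ 2 * d) : IsSOSUpTo d p := by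
  induction hp with
  | zero => exact ⟨0, Fin.elim0, fun i => i.elim0, by simp⟩
  | sq_add a hs ih =>
    have ha := totalDegree_le_totalDegree_add_of_isSumSq (IsSumSq.mul_self a) hs
    have hs' := totalDegree_le_totalDegree_add_of_isSumSq hs (IsSumSq.mul_self a)
    rw [add_comm] at hs'
    obtain ⟨k, q, hq, rfl⟩ := ih (hs'.trans hdeg)
    refine ⟨k + 1, Fin.cons a q, Fin.cases ?_ hq, by simp [Fin.sum_univ_succ, sq]⟩
    have := totalDegree_mul_self a
    simp only [Fin.cons_zero]
    omega

lemma Matrix.posSemidef_of_map_mul_self_nonneg {ι A : Type*} [Fintype ι] [CommRing A]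
    [Algebra ℝ A] (φ : A →ₗ[ℝ] ℝ) (hφ : ∀ c, 0 ≤ φ (c * c)) (c : ι → A) :
    (Matrix.of fun i j => φ (c i * c j)).PosSemidef := by
  refine .of_dotProduct_mulVec_nonneg ?_ fun v => (hφ (∑ i, v i • c i)).trans_eq ?_
  · ext i j
    simp [mul_comm]
  · rw [Finset.sum_mul_sum]
    simp only [smul_mul_smul_comm, map_sum, map_smul, smul_eq_mul, dotProduct, mulVec, of_apply,
      star_trivial, Finset.mul_sum]
    exact Finset.sum_congr rfl fun i _ => Finset.sum_congr rfl fun j _ => by ring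

namespace MvPolynomial

lemma eval_algebraMap_eq_sum {σ A : Type*} [CommRing A] [Algebra ℝ A]
    (Q : MvPolynomial σ A) (x : σ → ℝ) :
    eval (algebraMap ℝ A ∘ x) Q = ∑ α ∈ Q.support, eval x (monomial α 1) • Q.coeff α := by
  rw [eval_eq]
  refine Finset.sum_congr rfl fun α _ => ?_
  simp [eval_monomial, Algebra.smul_def, mul_comm, Finsupp.prod]

lemma exists_isSumSq_eval_eq {σ A : Type*} [CommRing A] [Algebra ℝ A]
    (φ : A →ₗ[ℝ] ℝ) (hφ : ∀ c, 0 ≤ φ (c * c)) (Q : MvPolynomial σ A) :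
    ∃ p : MvPolynomial σ ℝ, IsSumSq p ∧
      ∀ x, eval x p = φ (eval (algebraMap ℝ A ∘ x) Q * eval (algebraMap ℝ A ∘ x) Q) := by
  classical
  let c : Q.support → A := fun α => Q.coeff α
  obtain ⟨k, v, hv⟩ := Matrix.posSemidef_iff_eq_sum_vecMulVec.mp
    (Matrix.posSemidef_of_map_mul_self_nonneg φ hφ c)
  let q : Fin k → MvPolynomial σ ℝ := fun l => ∑ α, v l α • monomial α.1 1
  refine ⟨∑ l, q l * q l, IsSumSq.sum_mul_self _ _, fun x => ?_⟩
  let w : Q.support → ℝ := fun α => eval x (monomial α.1 1)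
  have hQ : eval (algebraMap ℝ A ∘ x) Q = ∑ α, w α • c α := by
    rw [eval_algebraMap_eq_sum, ← Finset.sum_coe_sort]
  have hq : ∀ l, eval x (q l) = ∑ α, v l α * w α := by
    simp [q, w, map_sum, smul_eval]
  calc eval x (∑ l, q l * q l)
      = ∑ α, ∑ β, w α * w β * (∑ l, vecMulVec (v l) (star (v l))) α β := by
        simp only [map_sum, map_mul, hq, Matrix.sum_apply, vecMulVec_apply, star_trivial]
        simp only [Finset.sum_mul, Finset.mul_sum]
        rw [Finset.sum_comm]
        conv_rhs => rw [Finset.sum_comm]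
        refine Finset.sum_congr rfl fun β _ => ?_
        rw [Finset.sum_comm]
        exact Finset.sum_congr rfl fun α _ => Finset.sum_congr rfl fun l _ => by ring
    _ = φ (eval (algebraMap ℝ A ∘ x) Q * eval (algebraMap ℝ A ∘ x) Q) := by
        rw [← hv, hQ, Finset.sum_mul_sum, map_sum]
        simp only [smul_mul_smul_comm, map_sum, map_smul, smul_eq_mul, of_apply, c]

end MvPolynomial

lemma intervalIntegrable_one_sub_mul_eval (c : Polynomial ℝ) :
    IntervalIntegrable (fun t => (1 - t) * c.eval t) MeasureTheory.volume 0 1 :=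
  ((continuous_const.sub continuous_id).mul c.continuous).intervalIntegrable _ _

noncomputable def taylorIntegral : Polynomial ℝ →ₗ[ℝ] ℝ where
  toFun c := ∫ t in (0 : ℝ)..1, (1 - t) * c.eval t
  map_add' c c' := by
    simp only [Polynomial.eval_add, mul_add]
    exact intervalIntegral.integral_add (intervalIntegrable_one_sub_mul_eval c)
      (intervalIntegrable_one_sub_mul_eval c')
  map_smul' r c := by
    simp only [Polynomial.eval_smul, smul_eq_mul, RingHom.id_apply, mul_left_comm _ r,
      intervalIntegral.integral_const_mul]

lemma taylorIntegral_apply (c : Polynomial ℝ) :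
    taylorIntegral c = ∫ t in (0 : ℝ)..1, (1 - t) * c.eval t := rfl

lemma taylorIntegral_mul_self_nonneg (c : Polynomial ℝ) : 0 ≤ taylorIntegral (c * c) := by
  refine intervalIntegral.integral_nonneg zero_le_one fun t ht => ?_
  rw [Polynomial.eval_mul]
  exact mul_nonneg (sub_nonneg.mpr ht.2) (mul_self_nonneg _)

lemma taylorIntegral_derivative_derivative (Φ : Polynomial ℝ) :
    taylorIntegral (derivative (derivative Φ)) =
      Φ.eval 1 - Φ.eval 0 - (derivative Φ).eval 0 := by
  have hderiv : ∀ t ∈ Set.uIcc (0 : ℝ) 1, HasDerivAt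
      (fun u => (1 - u) * (derivative Φ).eval u + Φ.eval u)
      ((1 - t) * (derivative (derivative Φ)).eval t) t := fun t _ => by
    refine ((((hasDerivAt_id t).const_sub 1).mul ((derivative Φ).hasDerivAt t)).add
      (Φ.hasDerivAt t)).congr_deriv ?_
    simp only [id]
    ring
  rw [taylorIntegral_apply, intervalIntegral.integral_eq_sub_of_hasDerivAt hderiv
    (intervalIntegrable_one_sub_mul_eval _)]
  simp only [sub_self, zero_mul, zero_add, sub_zero, one_mul]
  ring

namespace MvPolynomial

variable {σ : Type*}

lemma derivative_aeval {R : Type*} [CommSemiring R] [Fintype σ] (f : σ → Polynomial R)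
    (p : MvPolynomial σ R) :
    derivative (aeval f p) = ∑ i, aeval f (pderiv i p) * derivative (f i) := by
  induction p using MvPolynomial.induction_on with
  | C a => simp
  | add p q hp hq => simp [hp, hq, Finset.sum_add_distrib, add_mul]
  | mul_X p j hp =>
    classical
    simp only [map_mul, aeval_X, Polynomial.derivative_mul, hp, pderiv_mul, map_add, add_mul,
      Finset.sum_add_distrib, Finset.sum_mul]
    congr 1
    · exact Finset.sum_congr rfl fun i _ => by ring
    · simp [pderiv_X, Pi.single_apply]

noncomputable def affineLine (a v : σ → ℝ) : σ → Polynomial ℝ :=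
  fun i => Polynomial.C (a i) + Polynomial.C (v i) * Polynomial.X

lemma eval_aeval_affineLine (a v : σ → ℝ) (t : ℝ) (p : MvPolynomial σ ℝ) :
    (aeval (affineLine a v) p).eval t = eval (a + t • v) p := by
  induction p using MvPolynomial.induction_on with
  | C c => simp
  | add p q hp hq => simp [hp, hq]
  | mul_X p i hp => simp [hp, affineLine, mul_comm t]

lemma derivative_aeval_affineLine [Fintype σ] (a v : σ → ℝ) (p : MvPolynomial σ ℝ) :
    derivative (aeval (affineLine a v) p) =
      ∑ i, Polynomial.C (v i) * aeval (affineLine a v) (pderiv i p) := by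
  rw [derivative_aeval]
  refine Finset.sum_congr rfl fun i _ => ?_
  simp [affineLine, mul_comm (aeval _ _)]

lemma derivative_derivative_aeval_affineLine_of_hessian_eq [Fintype σ] {ι : Type*} [Fintype ι]
    {p : MvPolynomial σ ℝ} {L : Matrix σ ι (MvPolynomial σ ℝ)}
    (hL : (Matrix.of fun i j => pderiv i (pderiv j p)) = L * Lᵀ) (a v : σ → ℝ) :
    derivative (derivative (aeval (affineLine a v) p)) =
      ∑ k, (∑ i, Polynomial.C (v i) * aeval (affineLine a v) (L i k)) *
        (∑ i, Polynomial.C (v i) * aeval (affineLine a v) (L i k)) := by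
  have hH : ∀ i j, pderiv i (pderiv j p) = ∑ k, L i k * L j k := fun i j => by
    simpa [Matrix.mul_apply] using congrFun (congrFun hL i) j
  simp only [derivative_aeval_affineLine, Polynomial.derivative_mul, Polynomial.derivative_C,
    zero_mul, zero_add, map_sum, Finset.mul_sum, hH, map_mul, Finset.sum_mul]
  conv_rhs => rw [Finset.sum_comm]
  refine Finset.sum_congr rfl fun i _ => ?_
  conv_rhs => rw [Finset.sum_comm]
  exact Finset.sum_congr rfl fun j _ => Finset.sum_congr rfl fun k _ => by ring

/-- `u ↦ u(a + t (X - a))`, with `t` the variable of the coefficient ring `ℝ[t]`. -/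
noncomputable def segmentSubst (a : σ → ℝ) : MvPolynomial σ ℝ →ₐ[ℝ] MvPolynomial σ (Polynomial ℝ) :=
  aeval fun i => C (Polynomial.C (a i)) + C Polynomial.X * (X i - C (Polynomial.C (a i)))

lemma eval_segmentSubst (a x : σ → ℝ) (u : MvPolynomial σ ℝ) :
    eval (Polynomial.C ∘ x) (segmentSubst a u) = aeval (affineLine a (x - a)) u := by
  induction u using MvPolynomial.induction_on with
  | C c => simp [segmentSubst]
  | add p q hp hq => simp [hp, hq]
  | mul_X p i hp =>
    rw [map_mul, map_mul, map_mul, hp]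
    congr 1
    simp only [segmentSubst, affineLine, aeval_X, map_add, map_mul, map_sub, eval_C, eval_X,
      Function.comp_apply, Pi.sub_apply]
    ring

variable [Fintype σ]

noncomputable def taylorRemainder (p : MvPolynomial σ ℝ) (a : σ → ℝ) : MvPolynomial σ ℝ :=
  p - C (eval a p) - ∑ i, C (eval a (pderiv i p)) * (X i - C (a i))

lemma eval_taylorRemainder (p : MvPolynomial σ ℝ) (a x : σ → ℝ) :
    eval x (taylorRemainder p a) =
      (aeval (affineLine a (x - a)) p).eval 1 - (aeval (affineLine a (x - a)) p).eval 0 -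
        (derivative (aeval (affineLine a (x - a)) p)).eval 0 := by
  simp [taylorRemainder, eval_aeval_affineLine, derivative_aeval_affineLine,
    Polynomial.eval_finsetSum, mul_comm]

lemma totalDegree_taylorRemainder_le (p : MvPolynomial σ ℝ) (a : σ → ℝ) :
    (taylorRemainder p a).totalDegree ≤ p.totalDegree := by
  rcases eq_or_ne p.totalDegree 0 with h | h
  · rw [totalDegree_eq_zero_iff_eq_C.mp h]
    simp [taylorRemainder]
  refine (totalDegree_sub _ _).trans (max_le ((totalDegree_sub_C_le _ _).trans (by simp)) ?_)
  refine (totalDegree_finsetSum _ _).trans (Finset.sup_le fun i _ => ?_)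
  refine (totalDegree_mul _ _).trans ?_
  have hlin : (X i - C (a i) : MvPolynomial σ ℝ).totalDegree ≤ 1 :=
    (totalDegree_sub_C_le _ _).trans (totalDegree_X i).le
  rw [totalDegree_C]
  omega

lemma map_taylorRemainder (L : MvPolynomial σ ℝ →ₗ[ℝ] ℝ) (hL : L 1 = 1) (p : MvPolynomial σ ℝ) :
    L (taylorRemainder p fun i => L (X i)) = L p - eval (fun i => L (X i)) p := by
  have hC : ∀ c, L (C c) = c := fun c => by
    rw [C_eq_smul_one, map_smul, hL, smul_eq_mul, mul_one]
  simp [taylorRemainder, ← smul_eq_C_mul, hC]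

end MvPolynomial

variable {n : ℕ}

theorem IsSOSConvex.isSumSq_taylorRemainder {p : MvPolynomial (Fin n) ℝ} (hp : IsSOSConvex p)
    (a : Fin n → ℝ) : IsSumSq (taylorRemainder p a) := by
  obtain ⟨s, L, hL⟩ := hp
  choose q hq hq_eval using fun k : Fin s => exists_isSumSq_eval_eq taylorIntegral
    taylorIntegral_mul_self_nonneg (∑ i, (X i - C (Polynomial.C (a i))) * segmentSubst a (L i k))
  suffices h : taylorRemainder p a = ∑ k, q k from h ▸ IsSumSq.sum fun k _ => hq k
  refine MvPolynomial.funext fun x => ?_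
  rw [eval_taylorRemainder, ← taylorIntegral_derivative_derivative,
    derivative_derivative_aeval_affineLine_of_hessian_eq hL, map_sum, map_sum]
  refine Finset.sum_congr rfl fun k _ => ?_
  simp [hq_eval, eval_segmentSubst]

theorem IsSOSConvex.eval_le {d : ℕ} {p : MvPolynomial (Fin n) ℝ} (hp : IsSOSConvex p)
    (hdeg : p.totalDegree ≤ 2 * d) (L : MvPolynomial (Fin n) ℝ →ₗ[ℝ] ℝ) (hL1 : L 1 = 1)
    (hL : ∀ σ, IsSOSUpTo d σ → 0 ≤ L σ) :
    eval (fun i => L (X i)) p ≤ L p := by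
  have := hL _ ((hp.isSumSq_taylorRemainder fun i => L (X i)).isSOSUpTo
    ((totalDegree_taylorRemainder_le _ _).trans hdeg))
  rw [map_taylorRemainder L hL1] at this
  linarith

theorem IsSOSConvex.eval_nonneg_of_neg {d : ℕ} {g : MvPolynomial (Fin n) ℝ}
    (hg : IsSOSConvex (-g)) (hdeg : g.totalDegree ≤ 2 * d) (L : MvPolynomial (Fin n) ℝ →ₗ[ℝ] ℝ)
    (hL1 : L 1 = 1) (hL : ∀ σ, IsSOSUpTo d σ → 0 ≤ L σ) (hLg : 0 ≤ L g) :
    0 ≤ eval (fun i => L (X i)) g := by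
  have := hg.eval_le (by rwa [totalDegree_neg]) L hL1 hL
  rw [map_neg, map_neg] at this
  linarith

theorem stmt_10_general (n m : ℕ) (g : Fin m → MvPolynomial (Fin n) ℝ)
    (K : Set (Fin n → ℝ)) (hK : K = {x | ∀ j, 0 ≤ eval x (g j)})
    (f : MvPolynomial (Fin n) ℝ) (hf : IsSOSConvex f)
    (hg : ∀ j, IsSOSConvex (-(g j)))
    (fstar : ℝ) (xstar : Fin n → ℝ) (hxK : xstar ∈ K)
    (hfx : eval xstar f = fstar) (hmin : ∀ x ∈ K, fstar ≤ eval x f)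
    (d : ℕ)
    (hd : d = max ((f.totalDegree + 1) / 2)
      (Finset.univ.sup fun j => ((g j).totalDegree + 1) / 2)) :
    (∀ L : MvPolynomial (Fin n) ℝ →ₗ[ℝ] ℝ,
      L 1 = 1 → (∀ σ, IsSOSUpTo d σ → 0 ≤ L σ) → (∀ j, 0 ≤ L (g j)) →
        (fun i => L (X i)) ∈ K ∧ fstar ≤ eval (fun i => L (X i)) f ∧
          eval (fun i => L (X i)) f ≤ L f) ∧
    IsGLB {r : ℝ | ∃ L : MvPolynomial (Fin n) ℝ →ₗ[ℝ] ℝ,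
      L 1 = 1 ∧ (∀ σ, IsSOSUpTo d σ → 0 ≤ L σ) ∧ (∀ j, 0 ≤ L (g j)) ∧ r = L f} fstar := by
  have hdf : f.totalDegree ≤ 2 * d := by omega
  have hdg : ∀ j, (g j).totalDegree ≤ 2 * d := fun j => by
    have := Finset.le_sup (f := fun j => ((g j).totalDegree + 1) / 2) (Finset.mem_univ j)
    omega
  have main : ∀ L : MvPolynomial (Fin n) ℝ →ₗ[ℝ] ℝ,
      L 1 = 1 → (∀ σ, IsSOSUpTo d σ → 0 ≤ L σ) → (∀ j, 0 ≤ L (g j)) →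
        (fun i => L (X i)) ∈ K ∧ fstar ≤ eval (fun i => L (X i)) f ∧
          eval (fun i => L (X i)) f ≤ L f := fun L hL1 hL hLg => by
    have hmem : (fun i => L (X i)) ∈ K :=
      hK ▸ fun j => (hg j).eval_nonneg_of_neg (hdg j) L hL1 hL (hLg j)
    exact ⟨hmem, hmin _ hmem, hf.eval_le hdf L hL1 hL⟩
  refine ⟨main, fun r ⟨L, hL1, hL, hLg, hr⟩ => ?_, fun b hb => hb ?_⟩
  · obtain ⟨-, h₁, h₂⟩ := main L hL1 hL hLg
    linarith
  · refine ⟨(aeval xstar).toLinearMap, by simp, ?_, fun j => ?_, by simp [hfx]⟩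
    · rintro σ ⟨k, q, -, rfl⟩
      simp only [AlgHom.toLinearMap_apply, map_sum, map_pow]
      positivity
    · rw [hK] at hxK
      exact hxK j

/-- under Slater's condition, with `f` SOS-convex attaining its infimum `f*`
on `K`, each `−gⱼ` SOS-convex and `d = max(⌈deg f/2⌉, maxⱼ ⌈deg gⱼ/2⌉)`, every linear
functional `L` with `L(1)=1`, nonnegative on SOS polynomials of degree at most `2d`, and
`L(gⱼ) ≥ 0` gives a point `x* := (L(X₁),…,L(Xₙ)) ∈ K` with `f* ≤ f(x*) ≤ L(f)`;
consequently the infimum of `L(f)` over all such `L` equals `f*`. -/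
theorem stmt_10 (n m : ℕ) (g : Fin m → MvPolynomial (Fin n) ℝ)
    (K : Set (Fin n → ℝ)) (hK : K = {x | ∀ j, 0 ≤ eval x (g j)})
    (slater : ∃ x₀ : Fin n → ℝ, ∀ j, 0 < eval x₀ (g j))
    (f : MvPolynomial (Fin n) ℝ) (hf : IsSOSConvex f)
    (hg : ∀ j, IsSOSConvex (-(g j)))
    (fstar : ℝ) (xstar : Fin n → ℝ) (hxK : xstar ∈ K)
    (hfx : eval xstar f = fstar) (hmin : ∀ x ∈ K, fstar ≤ eval x f)
    (d : ℕ)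
    (hd : d = max ((f.totalDegree + 1) / 2)
      (Finset.univ.sup fun j => ((g j).totalDegree + 1) / 2)) :
    (∀ L : MvPolynomial (Fin n) ℝ →ₗ[ℝ] ℝ,
      L 1 = 1 → (∀ σ, IsSOSUpTo d σ → 0 ≤ L σ) → (∀ j, 0 ≤ L (g j)) →
        (fun i => L (X i)) ∈ K ∧ fstar ≤ eval (fun i => L (X i)) f ∧
          eval (fun i => L (X i)) f ≤ L f) ∧
    IsGLB {r : ℝ | ∃ L : MvPolynomial (Fin n) ℝ →ₗ[ℝ] ℝ,
      L 1 = 1 ∧ (∀ σ, IsSOSUpTo d σ → 0 ≤ L σ) ∧ (∀ j, 0 ≤ L (g j)) ∧ r = L f} fstar :=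
  stmt_10_general n m g K hK f hf hg fstar xstar hxK hfx hmin d hd
end

section
/- Let g₁,…,gₘ ∈ ℝ[X₁,…,Xₙ] and K := {x ∈ ℝⁿ : gⱼ(x) ≥ 0, j = 1,…,m}. Assume Slater's condition holds and that for every j = 1,…,m, ∇gⱼ(y) ≠ 0 whenever y ∈ K and gⱼ(y) = 0. Then K is convex if and only if for every j = 1,…,m one has ⟨∇gⱼ(y), x − y⟩ ≥ 0 for all x ∈ K and all y ∈ K with gⱼ(y) = 0. -/
/-!
Necessity is the first-order optimality condition: on the convex set `K` the function `gⱼ ≥ 0`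
attains its minimum `0` at `y`, so its derivative in the direction `x - y` is nonnegative.

Sufficiency is the classical fact that a closed set with nonempty interior that has a nonzero
supporting functional at each boundary point is convex. If a convex combination `z` of points of
`K` were outside `K`, the segment from a Slater point `x₀ ∈ interior K` to `z` would cross the
boundary at some `w`. There `gⱼ(w) = 0` for some `j` (otherwise `w` would be interior), and
`ℓ = ⟨∇gⱼ(w), ·⟩` is nonzero and minimal on `K` at `w`. Then `ℓ w < ℓ x₀` since `x₀` is interior,
and `ℓ w ≤ ℓ z` since the half-space `{ℓ ≥ ℓ w}` is convex and contains `K`; this is impossible for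
a point `w` strictly between `x₀` and `z`.
-/

open MvPolynomial Topology

section SupportingFunctional

variable {E : Type*} [AddCommGroup E] [Module ℝ E] [TopologicalSpace E] [ContinuousAdd E]
  [ContinuousSMul ℝ E] {K : Set E} {ℓ : Module.Dual ℝ E} {x y z : E}

theorem IsMinOn.lt_of_mem_interior (h : IsMinOn ℓ K y) (hℓ : ℓ ≠ 0) (hx : x ∈ interior K) :
    ℓ y < ℓ x := by
  refine (isMinOn_iff.1 h x (interior_subset hx)).lt_of_ne fun hxy =>
    hℓ (LinearMap.ext fun v => ?_)
  -- `ℓ` would also be minimal on `K` at the interior point `x`, so `ℓ v = 0` for every `v`.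
  have hmin : IsMinOn ℓ K x := isMinOn_iff.2 fun w hw => hxy ▸ isMinOn_iff.1 h w hw
  have hline : ∀ᶠ t : ℝ in 𝓝 0, x + t • v ∈ K :=
    (Continuous.tendsto' (by fun_prop) 0 x (by simp)).eventually (mem_interior_iff_mem_nhds.1 hx)
  refine hmin.hasLineDerivAt_eq_zero ?_ hline
  show HasDerivAt (fun t : ℝ => ℓ (x + t • v)) (ℓ v) 0
  simpa using ((hasDerivAt_id (0 : ℝ)).mul_const (ℓ v)).const_add (ℓ x)

theorem exists_mem_openSegment_frontier (hK : IsClosed K) (hx : x ∈ interior K) (hz : z ∉ K) :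
    ∃ y ∈ openSegment ℝ x z, y ∈ frontier K := by
  obtain ⟨y, hy, hyK, hyint⟩ : ∃ y ∈ segment ℝ x z, y ∈ K ∧ y ∉ interior K := by
    by_contra! h
    have hsub : segment ℝ x z ⊆ interior K ∪ Kᶜ := fun y hy => (em (y ∈ K)).imp (h y hy) id
    rcases (convex_segment x z).isPreconnected.subset_or_subset isOpen_interior hK.isOpen_compl
      (disjoint_compl_right.mono_left interior_subset) hsub with hs | hs
    · exact hz (interior_subset (hs (right_mem_segment ℝ x z)))
    · exact hs (left_mem_segment ℝ x z) (interior_subset hx)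
  refine ⟨y, mem_openSegment_of_ne_left_right ?_ ?_ hy, hK.frontier_eq ▸ ⟨hyK, hyint⟩⟩
  · exact fun hxy => hyint (hxy ▸ hx)
  · exact fun hzy => hz (hzy ▸ hyK)

theorem convex_of_forall_frontier_exists_isMinOn (hK : IsClosed K) (hK' : (interior K).Nonempty)
    (h : ∀ y ∈ frontier K, ∃ ℓ : Module.Dual ℝ E, ℓ ≠ 0 ∧ IsMinOn ℓ K y) : Convex ℝ K := by
  intro x hx y hy a b ha hb hab
  set z := a • x + b • y
  by_contra hz
  obtain ⟨x₀, hx₀⟩ := hK'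
  obtain ⟨w, ⟨c, d, hc, hd, hcd, rfl⟩, hw⟩ := exists_mem_openSegment_frontier hK hx₀ hz
  obtain ⟨ℓ, hℓ, hmin⟩ := h _ hw
  have hx₀w := hmin.lt_of_mem_interior hℓ hx₀
  have hzw : ℓ (c • x₀ + d • z) ≤ ℓ z :=
    convex_halfSpace_ge ℓ.isLinear _ (isMinOn_iff.1 hmin x hx) (isMinOn_iff.1 hmin y hy) ha hb hab
  simp only [map_add, map_smul, smul_eq_mul] at hx₀w hzw
  obtain rfl : d = 1 - c := by linarith
  nlinarith

end SupportingFunctional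

theorem IsMinOn.hasFDerivWithinAt_sub_nonneg {E : Type*} [NormedAddCommGroup E] [NormedSpace ℝ E]
    {s : Set E} {f : E → ℝ} {f' : StrongDual ℝ E} {x y : E} (h : IsMinOn f s y)
    (hf : HasFDerivWithinAt f f' s y) (hs : Convex ℝ s) (hx : x ∈ s) (hy : y ∈ s) :
    0 ≤ f' (x - y) :=
  h.localize.hasFDerivWithinAt_nonneg hf
    (sub_mem_posTangentConeAt_of_segment_subset (hs.segment_subset hy hx))

theorem MvPolynomial.hasFDerivAt_eval {𝕜 σ : Type*} [NontriviallyNormedField 𝕜] [Fintype σ]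
    (p : MvPolynomial σ 𝕜) (x : σ → 𝕜) :
    HasFDerivAt (fun y => eval y p)
      (∑ i, eval x (pderiv i p) • (ContinuousLinearMap.proj i : (σ → 𝕜) →L[𝕜] 𝕜)) x := by
  induction p using MvPolynomial.induction_on generalizing x with
  | C a =>
    simp only [eval_C]
    refine (hasFDerivAt_const a x).congr_fderiv ?_
    ext v
    simp
  | add p q hp hq =>
    simp only [map_add]
    refine ((hp x).add (hq x)).congr_fderiv ?_
    ext v
    simp [add_mul, Finset.sum_add_distrib]
  | mul_X p i hp =>
    classical
    simp only [map_mul, eval_X]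
    refine ((hp x).mul (hasFDerivAt_apply i x)).congr_fderiv ?_
    ext v
    simp [pderiv_X, Pi.single_apply, apply_ite (eval x), add_mul, Finset.sum_add_distrib,
      Finset.mul_sum, mul_assoc]

/-- under Slater's condition and nondegeneracy of the gradients on the
boundary, `K = {x : gⱼ(x) ≥ 0 ∀j}` is convex if and only if for every `j`,
`⟨∇gⱼ(y), x − y⟩ ≥ 0` for all `x ∈ K` and all `y ∈ K` with `gⱼ(y) = 0`. -/
theorem stmt_13 (n m : ℕ) (g : Fin m → MvPolynomial (Fin n) ℝ)
    (K : Set (Fin n → ℝ)) (hK : K = {x | ∀ j, 0 ≤ eval x (g j)})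
    (slater : ∃ x₀ : Fin n → ℝ, ∀ j, 0 < eval x₀ (g j))
    (hnd : ∀ j : Fin m, ∀ y ∈ K, eval y (g j) = 0 →
      (fun i => eval y (pderiv i (g j))) ≠ (0 : Fin n → ℝ)) :
    Convex ℝ K ↔ ∀ j : Fin m, ∀ x ∈ K, ∀ y ∈ K, eval y (g j) = 0 →
      0 ≤ ∑ i, eval y (pderiv i (g j)) * (x i - y i) := by
  have hmem (x) : x ∈ K ↔ ∀ j, 0 ≤ eval x (g j) := Set.ext_iff.1 hK x
  have hclosed : IsClosed K := by
    rw [hK, Set.ofPred_forall]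
    exact isClosed_iInter fun j => isClosed_le continuous_const (continuous_eval _)
  have hpos : {x | ∀ j, 0 < eval x (g j)} ⊆ interior K := by
    refine interior_maximal (fun x hx => (hmem x).2 fun j => (hx j).le) ?_
    rw [Set.ofPred_forall]
    exact isOpen_iInter_of_finite fun j => isOpen_lt continuous_const (continuous_eval _)
  constructor
  · intro hconv j x hx y hy hgy
    have hmin : IsMinOn (fun x => eval x (g j)) K y :=
      isMinOn_iff.2 fun x hx => hgy ▸ (hmem x).1 hx j
    simpa using hmin.hasFDerivWithinAt_sub_nonneg
      (hasFDerivAt_eval (g j) y).hasFDerivWithinAt hconv hx hy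
  · intro hsupp
    obtain ⟨x₀, hx₀⟩ := slater
    refine convex_of_forall_frontier_exists_isMinOn hclosed ⟨x₀, hpos hx₀⟩ fun y hy => ?_
    have hyK : y ∈ K := hclosed.frontier_subset hy
    obtain ⟨j, hgy⟩ : ∃ j, eval y (g j) = 0 := by
      by_contra! hne
      exact hy.2 (hpos fun j => ((hmem y).1 hyK j).lt_of_ne' (hne j))
    refine ⟨dotProductEquiv ℝ (Fin n) fun i => eval y (pderiv i (g j)),
      (LinearEquiv.map_ne_zero_iff _).2 (hnd j y hyK hgy), isMinOn_iff.2 fun x hx => ?_⟩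
    rw [← sub_nonneg, ← map_sub]
    exact hsupp j x hx y hyK hgy
end

section
/- Let g₁,…,gₘ ∈ ℝ[X₁,…,Xₙ] and K := {x ∈ ℝⁿ : gⱼ(x) ≥ 0, j = 1,…,m}. Assume Slater's condition holds, that for every j, ∇gⱼ(y) ≠ 0 whenever y ∈ K and gⱼ(y) = 0, and that for every j one has ⟨∇gⱼ(y), x − y⟩ ≥ 0 for all x ∈ K and all y ∈ K with gⱼ(y) = 0. Then for every x* ∈ K and every nonzero λ ∈ ℝ₊ᵐ with λⱼ·gⱼ(x*) = 0 for all j, one has Σⱼ₌₁ᵐ λⱼ·∇gⱼ(x*) ≠ 0. (Consequently, in the Fritz-John optimality conditions at a minimizer of a linear function on K, the multiplier of the objective can be taken positive, i.e., the KKT conditions hold.) -/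
/-!
Let `x₀` be a Slater point, so `x₀ ∈ interior K`. For a constraint `gⱼ` active at `x*`, the
hypotheses say that the nonzero linear functional `∇gⱼ(x*)` is bounded below on `K` by its value
at `x*`; a nonzero linear functional is an open map, so it is strictly larger at the interior
point `x₀`, i.e. `⟨∇gⱼ(x*), x₀ − x*⟩ > 0`. Complementary slackness puts the support of `λ` among
the active constraints, so `⟨Σⱼ λⱼ ∇gⱼ(x*), x₀ − x*⟩ = Σⱼ λⱼ ⟨∇gⱼ(x*), x₀ − x*⟩ > 0`.
-/

open MvPolynomial Set Matrix

theorem StrongDual.lt_apply_of_mem_interior {E : Type*} [AddCommGroup E] [TopologicalSpace E]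
    [ContinuousAdd E] [Module ℝ E] [ContinuousSMul ℝ E] {f : StrongDual ℝ E} (hf : f ≠ 0)
    {s : Set E} {c : ℝ} (h : ∀ x ∈ s, c ≤ f x) {a : E} (ha : a ∈ interior s) : c < f a := by
  have hsub : f '' interior s ⊆ interior (Ici c) :=
    interior_maximal (image_subset_iff.2 fun x hx => h x (interior_subset hx))
      (f.isOpenMap_of_ne_zero hf _ isOpen_interior)
  rw [interior_Ici] at hsub
  exact hsub ⟨a, ha, rfl⟩

theorem lt_dotProduct_of_mem_interior {ι : Type*} [Fintype ι] {v : ι → ℝ} (hv : v ≠ 0)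
    {s : Set (ι → ℝ)} {c : ℝ} (h : ∀ x ∈ s, c ≤ v ⬝ᵥ x) {a : ι → ℝ} (ha : a ∈ interior s) :
    c < v ⬝ᵥ a := by
  classical
  let f : StrongDual ℝ (ι → ℝ) := LinearMap.toContinuousLinearMap (dotProductEquiv ℝ ι v)
  have hf : f ≠ 0 := by simpa [f] using hv
  exact StrongDual.lt_apply_of_mem_interior hf h ha

theorem setOf_forall_pos_subset_interior {X ι : Type*} [TopologicalSpace X] [Finite ι]
    {f : ι → X → ℝ} (hf : ∀ j, Continuous (f j)) :
    {x | ∀ j, 0 < f j x} ⊆ interior {x | ∀ j, 0 ≤ f j x} :=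
  interior_maximal (fun _ hx j => (hx j).le)
    (by simpa only [ofPred_forall] using
      isOpen_iInter_of_finite fun j => isOpen_lt continuous_const (hf j))

theorem dotProduct_pos_of_ne_zero {ι R : Type*} [Fintype ι] [Semiring R] [LinearOrder R]
    [IsStrictOrderedRing R] {w a : ι → R} (hw : 0 ≤ w) (hw0 : w ≠ 0)
    (ha : ∀ j, w j ≠ 0 → 0 < a j) : 0 < w ⬝ᵥ a := by
  obtain ⟨j, hj⟩ := Function.ne_iff.1 hw0
  refine Finset.sum_pos' (fun i _ => ?_)
    ⟨j, Finset.mem_univ j, mul_pos ((hw j).lt_of_ne' hj) (ha j hj)⟩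
  rcases (hw i).eq_or_lt with hi | hi
  · simp [← hi]
  · exact mul_nonneg hi.le (ha i hi.ne').le

noncomputable def MvPolynomial.jacobian {ι σ R : Type*} [CommSemiring R]
    (g : ι → MvPolynomial σ R) (x : σ → R) : Matrix ι σ R :=
  Matrix.of fun j i => eval x (pderiv i (g j))

/-- under Slater's condition, boundary nondegeneracy, and the supporting
hyperplane condition `⟨∇gⱼ(y), x − y⟩ ≥ 0` for all `x ∈ K`, `y ∈ K` with `gⱼ(y) = 0`,
for every `x* ∈ K` and every nonzero `λ ∈ ℝ₊ᵐ` with `λⱼ·gⱼ(x*) = 0` for all `j`, one has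
`Σⱼ λⱼ·∇gⱼ(x*) ≠ 0` (so the Fritz-John multiplier of the objective can be taken positive,
i.e. the KKT conditions hold). -/
theorem stmt_18 (n m : ℕ) (g : Fin m → MvPolynomial (Fin n) ℝ)
    (K : Set (Fin n → ℝ)) (hK : K = {x | ∀ j, 0 ≤ eval x (g j)})
    (slater : ∃ x₀ : Fin n → ℝ, ∀ j, 0 < eval x₀ (g j))
    (hnd : ∀ j : Fin m, ∀ y ∈ K, eval y (g j) = 0 →
      (fun i => eval y (pderiv i (g j))) ≠ (0 : Fin n → ℝ))
    (hsupp : ∀ j : Fin m, ∀ x ∈ K, ∀ y ∈ K, eval y (g j) = 0 →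
      0 ≤ ∑ i, eval y (pderiv i (g j)) * (x i - y i)) :
    ∀ xstar ∈ K, ∀ lam : Fin m → ℝ, (∀ j, 0 ≤ lam j) → lam ≠ 0 →
      (∀ j, lam j * eval xstar (g j) = 0) →
      (fun i => ∑ j, lam j * eval xstar (pderiv i (g j))) ≠ (0 : Fin n → ℝ) := by
  intro xstar hxstar lam hlam hlam0 hcomp hzero
  obtain ⟨x₀, hx₀⟩ := slater
  have hx₀K : x₀ ∈ interior K :=
    hK ▸ setOf_forall_pos_subset_interior (fun j => continuous_eval (g j)) hx₀
  have hactive : ∀ j, lam j ≠ 0 → 0 < (jacobian g xstar *ᵥ (x₀ - xstar)) j := by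
    intro j hj
    have hgj : eval xstar (g j) = 0 := (mul_eq_zero.1 (hcomp j)).resolve_left hj
    change 0 < (fun i => eval xstar (pderiv i (g j))) ⬝ᵥ (x₀ - xstar)
    rw [dotProduct_sub, sub_pos]
    exact lt_dotProduct_of_mem_interior (hnd j xstar hxstar hgj)
      (fun x hx => sub_nonneg.1 (by rw [← dotProduct_sub]; exact hsupp j x hx xstar hxstar hgj))
      hx₀K
  have hpos := dotProduct_pos_of_ne_zero hlam hlam0 hactive
  rw [dotProduct_mulVec, show lam ᵥ* jacobian g xstar = 0 from hzero, zero_dotProduct] at hpos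
  exact lt_irrefl 0 hpos
end
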